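/- Let α ∈ [0,1], let h_t ∈ [0,5] be the historical average rating after t feedbacks with h_{t+1} = (t·h_t + V_t)/(t+1) and V_t = α h_t + (1-α) r + η_t, where r ∈ [0,5] is the fixed true reward and η_t are i.i.d. mean-zero bounded noise. If α < 1, then E[h_t] → r as t → ∞. -/

import Mathlib

open MeasureTheory Filter

theorem herding_average_converges {Ω : Type*} [MeasurableSpace Ω]
    (P : Measure Ω) [IsProbabilityMeasure P]
    (α r : ℝ) (hα0 : 0 ≤ α) (hα1 : α < 1) (hr : r ∈ Set.Icc (0:ℝ) 5)
    (h V η : ℕ → Ω → ℝ)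
    (hmeas : ∀ t, Measurable (h t)) (hηmeas : ∀ t, Measurable (η t))
    (hbddh : ∀ t ω, h t ω ∈ Set.Icc (0:ℝ) 5)
    (C : ℝ) (hbddη : ∀ t ω, |η t ω| ≤ C)
    (hmean : ∀ t, ∫ ω, η t ω ∂P = 0)
    (hVdef : ∀ t ω, V t ω = α * h t ω + (1 - α) * r + η t ω)
    (hrec : ∀ t ω, h (t+1) ω = ((t : ℝ) * h t ω + V t ω) / (t + 1)) :
    Tendsto (fun t => ∫ ω, h t ω ∂P) atTop (nhds r) := by
  set m : ℕ → ℝ := fun t => ∫ ω, h t ω ∂P with hm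
  have hint : ∀ t, Integrable (h t) P := by
    intro t
    refine Integrable.mono' (integrable_const 5) (hmeas t).aestronglyMeasurable ?_
    filter_upwards with ω
    rw [Real.norm_eq_abs, abs_le]
    exact ⟨by linarith [(hbddh t ω).1], (hbddh t ω).2⟩
  have hηint : ∀ t, Integrable (η t) P := by
    intro t
    refine Integrable.mono' (integrable_const C) (hηmeas t).aestronglyMeasurable ?_
    filter_upwards with ω
    rw [Real.norm_eq_abs]; exact hbddη t ω
  have hstep : ∀ t : ℕ, m (t+1) = (((t:ℝ)+α) * m t + (1-α)*r) / ((t:ℝ)+1) := by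
    intro t
    have : ∀ ω, h (t+1) ω = ((((t:ℝ)+α) * h t ω + (1-α)*r) + η t ω) / ((t:ℝ)+1) := by
      intro ω; rw [hrec, hVdef]; ring
    calc m (t+1) = ∫ ω, ((((t:ℝ)+α) * h t ω + (1-α)*r) + η t ω) / ((t:ℝ)+1) ∂P := by
          simp only [hm]; exact integral_congr_ae (Filter.Eventually.of_forall this)
      _ = (∫ ω, ((((t:ℝ)+α) * h t ω + (1-α)*r) + η t ω) ∂P) / ((t:ℝ)+1) := integral_div _ _
      _ = ((((t:ℝ)+α) * m t + (1-α)*r) + ∫ ω, η t ω ∂P) / ((t:ℝ)+1) := by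
          have I1 : Integrable (fun ω => ((t:ℝ)+α) * h t ω + (1-α)*r) P :=
            ((hint t).const_mul _).add (integrable_const _)
          rw [integral_add I1 (hηint t),
            integral_add ((hint t).const_mul _) (integrable_const _),
            integral_const_mul, integral_const]
          simp
          rfl
      _ = (((t:ℝ)+α) * m t + (1-α)*r) / ((t:ℝ)+1) := by rw [hmean t, add_zero]
  have hdiff : ∀ t : ℕ, m (t+1) - r = (((t:ℝ)+α)/((t:ℝ)+1)) * (m t - r) := by
    intro t
    have ht1 : ((t:ℝ)+1) ≠ 0 := by positivity
    rw [hstep t]; field_simp; ring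
  have heq : ∀ t : ℕ, m t - r = (m 0 - r) * ∏ k ∈ Finset.range t, (((k:ℝ)+α)/((k:ℝ)+1)) := by
    intro t
    induction t with
    | zero => simp
    | succ n ih => rw [hdiff n, ih, Finset.prod_range_succ]; ring
  have hzero : Tendsto (fun t => m t - r) atTop (nhds 0) := by
    apply squeeze_zero_norm (a := fun t => |m 0 - r| *
      Real.exp (-(1-α) * ∑ k ∈ Finset.range t, 1/((k:ℝ)+1)))
    · intro t
      rw [heq t, Real.norm_eq_abs, abs_mul]
      apply mul_le_mul_of_nonneg_left _ (abs_nonneg _)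
      have hnn : ∀ k ∈ Finset.range t, (0:ℝ) ≤ ((k:ℝ)+α)/((k:ℝ)+1) := by
        intro k _; positivity
      rw [abs_of_nonneg (Finset.prod_nonneg hnn)]
      calc ∏ k ∈ Finset.range t, (((k:ℝ)+α)/((k:ℝ)+1))
          ≤ ∏ k ∈ Finset.range t, Real.exp (-(1-α)/((k:ℝ)+1)) := by
            apply Finset.prod_le_prod hnn
            intro k _
            have hk1 : (0:ℝ) < (k:ℝ)+1 := by positivity
            have : ((k:ℝ)+α)/((k:ℝ)+1) = 1 + (-(1-α)/((k:ℝ)+1)) := by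
              field_simp
              ring
            rw [this, add_comm]
            exact Real.add_one_le_exp _
        _ = Real.exp (-(1-α) * ∑ k ∈ Finset.range t, 1/((k:ℝ)+1)) := by
            rw [← Real.exp_sum, Finset.mul_sum]
            congr 1; apply Finset.sum_congr rfl; intro k _; ring
    · rw [show (0:ℝ) = |m 0 - r| * 0 by ring]
      apply Tendsto.const_mul
      apply Real.tendsto_exp_atBot.comp
      exact (tendsto_const_mul_atBot_of_neg (by linarith)).mpr
        Real.tendsto_sum_range_one_div_nat_succ_atTop
  have := hzero.add_const r
  simpa using this
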